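/- Let ρ be a faithful non-maximally-mixed density matrix with extreme eigenvalues λ_min, λ_max. For any Hermitian A, B: |Tr(ρ[A,B])|² ≤ (4(λ_max − λ_min)²/(λ_max + λ_min)²)·[‖A‖²_ρ‖B‖²_ρ − ((1/2)Tr(ρ{A,B}))²], where ‖X‖²_ρ := Tr(ρX²). -/

import Mathlib

/-!
In an eigenbasis of `ρ` one has `Tr(ρ[X,Y]) = ∑ᵢⱼ (λᵢ - λⱼ) xᵢⱼ yⱼᵢ`, and
`|λᵢ - λⱼ| ≤ c (λᵢ + λⱼ)` with `c = (λ_max - λ_min)/(λ_max + λ_min)`. Cauchy–Schwarz with the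
weights `λᵢ + λⱼ`, which sum `|xᵢⱼ|²` to `2‖X‖²_ρ`, gives the norm form
`|Tr(ρ[X,Y])|² ≤ 4c² ‖X‖²_ρ ‖Y‖²_ρ`. Applying it to `A` and to the component
`B - tA` of `B` that is `ρ`-orthogonal to `A` leaves the commutator unchanged and replaces
`‖B‖²_ρ` by `‖B‖²_ρ - s²/‖A‖²_ρ`, where `s = ½ Tr(ρ{A,B})`; if `‖A‖_ρ = 0` then `A = 0`
because `ρ > 0`.
-/

open Matrix ComplexOrder

theorem abs_sub_mul_add_le_sub_mul_add {a b m M : ℝ} (hm : 0 ≤ m) (ha : m ≤ a) (ha' : a ≤ M)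
    (hb : m ≤ b) (hb' : b ≤ M) : |a - b| * (M + m) ≤ (M - m) * (a + b) := by
  rcases abs_cases (a - b) with ⟨h, _⟩ | ⟨h, _⟩ <;> rw [h] <;> nlinarith

theorem Matrix.IsHermitian.norm_apply {ι : Type*} {x : Matrix ι ι ℂ} (hx : x.IsHermitian)
    (i j : ι) : ‖x j i‖ = ‖x i j‖ := by
  rw [← hx.apply i j, norm_star]

section

variable {ι : Type*} [Fintype ι] [DecidableEq ι] {d : ι → ℝ} {m M : ℝ}

theorem trace_diagonal_mul (d : ι → ℂ) (x : Matrix ι ι ℂ) :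
    (diagonal d * x).trace = ∑ i, d i * x i i := by
  simp [trace]

theorem trace_diagonal_mul_commutator (d : ι → ℂ) (x y : Matrix ι ι ℂ) :
    (diagonal d * (x * y - y * x)).trace = ∑ i, ∑ j, (d i - d j) * (x i j * y j i) := by
  rw [Matrix.mul_sub, trace_sub, trace_diagonal_mul, trace_diagonal_mul]
  simp only [mul_apply, Finset.mul_sum, sub_mul, Finset.sum_sub_distrib]
  rw [Finset.sum_comm (f := fun i j => d i * (y i j * x j i))]
  simp only [mul_comm (y _ _) (x _ _)]

theorem re_trace_diagonal_mul_mul_self (d : ι → ℝ) {x : Matrix ι ι ℂ} (hx : x.IsHermitian) :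
    (diagonal (fun i => (d i : ℂ)) * x * x).trace.re = ∑ i, ∑ j, d i * ‖x i j‖ ^ 2 := by
  simp only [Matrix.mul_assoc, trace_diagonal_mul, mul_apply, Finset.mul_sum, Complex.re_sum]
  refine Finset.sum_congr rfl fun i _ => Finset.sum_congr rfl fun j _ => ?_
  rw [← hx.apply i j, Complex.star_def, Complex.conj_mul', ← Complex.ofReal_pow,
    Complex.re_ofReal_mul, Complex.ofReal_re, Complex.norm_conj]

omit [DecidableEq ι] in
theorem sum_sum_add_mul_sq {x : Matrix ι ι ℂ} (hx : x.IsHermitian) :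
    ∑ i, ∑ j, (d i + d j) * ‖x i j‖ ^ 2 = 2 * ∑ i, ∑ j, d i * ‖x i j‖ ^ 2 := by
  simp only [add_mul, Finset.sum_add_distrib]
  rw [Finset.sum_comm (f := fun i j => d j * ‖x i j‖ ^ 2)]
  simp only [hx.norm_apply]
  ring

theorem norm_trace_diagonal_mul_commutator_mul_le (hm : 0 ≤ m) (hmM : m ≤ M)
    (hlo : ∀ i, m ≤ d i) (hhi : ∀ i, d i ≤ M) (x : Matrix ι ι ℂ) {y : Matrix ι ι ℂ}
    (hy : y.IsHermitian) :
    ‖(diagonal (fun i => (d i : ℂ)) * (x * y - y * x)).trace‖ * (M + m) ≤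
      (M - m) * ∑ i, ∑ j, (d i + d j) * (‖x i j‖ * ‖y i j‖) := by
  rw [trace_diagonal_mul_commutator]
  calc _ ≤ (∑ i, ∑ j, ‖((d i : ℂ) - d j) * (x i j * y j i)‖) * (M + m) :=
        mul_le_mul_of_nonneg_right
          ((norm_sum_le _ _).trans (Finset.sum_le_sum fun i _ => norm_sum_le _ _))
          (by linarith)
    _ ≤ _ := by
      simp only [Finset.sum_mul, Finset.mul_sum]
      refine Finset.sum_le_sum fun i _ => Finset.sum_le_sum fun j _ => ?_
      rw [norm_mul, norm_mul, ← Complex.ofReal_sub, Complex.norm_real, Real.norm_eq_abs,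
        hy.norm_apply]
      nlinarith [abs_sub_mul_add_le_sub_mul_add hm (hlo i) (hhi i) (hlo j) (hhi j),
        mul_nonneg (norm_nonneg (x i j)) (norm_nonneg (y i j))]

theorem sq_sum_sum_add_mul_le (hm : 0 ≤ m) (hlo : ∀ i, m ≤ d i) {x y : Matrix ι ι ℂ}
    (hx : x.IsHermitian) (hy : y.IsHermitian) :
    (∑ i, ∑ j, (d i + d j) * (‖x i j‖ * ‖y i j‖)) ^ 2 ≤
      4 * ((diagonal (fun i => (d i : ℂ)) * x * x).trace.re *
        (diagonal (fun i => (d i : ℂ)) * y * y).trace.re) := by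
  have hw : ∀ p : ι × ι, 0 ≤ d p.1 + d p.2 := fun p => by linarith [hlo p.1, hlo p.2]
  have hcs := Finset.sum_sq_le_sum_mul_sum_of_sq_le_mul Finset.univ
    (r := fun p : ι × ι => (d p.1 + d p.2) * (‖x p.1 p.2‖ * ‖y p.1 p.2‖))
    (f := fun p => (d p.1 + d p.2) * ‖x p.1 p.2‖ ^ 2)
    (g := fun p => (d p.1 + d p.2) * ‖y p.1 p.2‖ ^ 2)
    (fun p _ => mul_nonneg (hw p) (sq_nonneg _)) (fun p _ => mul_nonneg (hw p) (sq_nonneg _))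
    (fun p _ => le_of_eq (by ring))
  simp only [Fintype.sum_prod_type] at hcs
  rw [sum_sum_add_mul_sq hx, sum_sum_add_mul_sq hy] at hcs
  rw [re_trace_diagonal_mul_mul_self d hx, re_trace_diagonal_mul_mul_self d hy]
  linarith

theorem sq_norm_trace_diagonal_mul_commutator_mul_le (hm : 0 ≤ m) (hmM : m ≤ M)
    (hlo : ∀ i, m ≤ d i) (hhi : ∀ i, d i ≤ M) {x y : Matrix ι ι ℂ}
    (hx : x.IsHermitian) (hy : y.IsHermitian) :
    ‖(diagonal (fun i => (d i : ℂ)) * (x * y - y * x)).trace‖ ^ 2 * (M + m) ^ 2 ≤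
      4 * (M - m) ^ 2 * ((diagonal (fun i => (d i : ℂ)) * x * x).trace.re *
        (diagonal (fun i => (d i : ℂ)) * y * y).trace.re) := by
  have h := norm_trace_diagonal_mul_commutator_mul_le hm hmM hlo hhi x hy
  calc _ = (‖(diagonal (fun i => (d i : ℂ)) * (x * y - y * x)).trace‖ * (M + m)) ^ 2 := by ring
    _ ≤ ((M - m) * ∑ i, ∑ j, (d i + d j) * (‖x i j‖ * ‖y i j‖)) ^ 2 :=
        pow_le_pow_left₀ (mul_nonneg (norm_nonneg _) (by linarith)) h 2
    _ ≤ (M - m) ^ 2 * (4 * ((diagonal (fun i => (d i : ℂ)) * x * x).trace.re *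
          (diagonal (fun i => (d i : ℂ)) * y * y).trace.re)) := by
        rw [mul_pow]
        exact mul_le_mul_of_nonneg_left (sq_sum_sum_add_mul_le hm hlo hx hy) (sq_nonneg _)
    _ = _ := by ring

theorem eq_zero_of_re_trace_diagonal_mul_mul_self_eq_zero (hd : ∀ i, 0 < d i)
    {x : Matrix ι ι ℂ} (hx : x.IsHermitian)
    (h : (diagonal (fun i => (d i : ℂ)) * x * x).trace.re = 0) : x = 0 := by
  rw [re_trace_diagonal_mul_mul_self d hx] at h
  ext i j
  have hrow := (Finset.sum_eq_zero_iff_of_nonneg fun i _ =>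
    Finset.sum_nonneg fun j _ => mul_nonneg (hd i).le (sq_nonneg ‖x i j‖)).mp h i
      (Finset.mem_univ i)
  have hentry := (Finset.sum_eq_zero_iff_of_nonneg fun j _ =>
    mul_nonneg (hd i).le (sq_nonneg ‖x i j‖)).mp hrow j (Finset.mem_univ j)
  simpa [(hd i).ne'] using hentry

theorem Matrix.IsHermitian.exists_starAlgEquiv_diagonal {ρ : Matrix ι ι ℂ}
    (hρ : ρ.IsHermitian) :
    ∃ φ : Matrix ι ι ℂ ≃⋆ₐ[ℂ] Matrix ι ι ℂ,
      φ ρ = diagonal (fun i => (hρ.eigenvalues i : ℂ)) ∧ ∀ M, (φ M).trace = M.trace := by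
  refine ⟨Unitary.conjStarAlgAut ℂ _ (star hρ.eigenvectorUnitary), ?_, fun M => ?_⟩
  · rw [congrArg (Unitary.conjStarAlgAut ℂ _ _) hρ.spectral_theorem,
      ← Unitary.conjStarAlgAut_mul_apply]
    simp
  · simp [Unitary.conjStarAlgAut_apply, trace_mul_cycle]

theorem sq_norm_trace_commutator_le {ρ : Matrix ι ι ℂ} (hρ : ρ.IsHermitian) (hm : 0 < m)
    (hmin : IsLeast (Set.range hρ.eigenvalues) m)
    (hmax : IsGreatest (Set.range hρ.eigenvalues) M)
    {X Y : Matrix ι ι ℂ} (hX : X.IsHermitian) (hY : Y.IsHermitian) :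
    ‖(ρ * (X * Y - Y * X)).trace‖ ^ 2 ≤
      4 * (M - m) ^ 2 / (M + m) ^ 2 * ((ρ * X * X).trace.re * (ρ * Y * Y).trace.re) := by
  obtain ⟨φ, hφρ, hφtr⟩ := hρ.exists_starAlgEquiv_diagonal
  have hmM : m ≤ M := hmax.2 hmin.1
  rw [← hφtr, ← hφtr (ρ * X * X), ← hφtr (ρ * Y * Y)]
  simp only [map_mul, map_sub, hφρ]
  rw [div_mul_eq_mul_div, le_div_iff₀ (pow_pos (by linarith) 2)]
  exact sq_norm_trace_diagonal_mul_commutator_mul_le hm.le hmM (fun i => hmin.2 ⟨i, rfl⟩)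
    (fun i => hmax.2 ⟨i, rfl⟩) (IsSelfAdjoint.map hX φ) (IsSelfAdjoint.map hY φ)

theorem Matrix.PosDef.eq_zero_of_re_trace_mul_mul_self_eq_zero {ρ : Matrix ι ι ℂ}
    (hρ : ρ.PosDef) {X : Matrix ι ι ℂ} (hX : X.IsHermitian) (h : (ρ * X * X).trace.re = 0) :
    X = 0 := by
  obtain ⟨φ, hφρ, hφtr⟩ := hρ.1.exists_starAlgEquiv_diagonal
  rw [← hφtr, map_mul, map_mul, hφρ] at h
  exact (map_eq_zero_iff φ φ.injective).mp <|
    eq_zero_of_re_trace_diagonal_mul_mul_self_eq_zero hρ.eigenvalues_pos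
      (IsSelfAdjoint.map hX φ) h

omit [DecidableEq ι] in
theorem re_trace_mul_sub_smul_mul_sub_smul (ρ A B : Matrix ι ι ℂ) (t : ℝ) :
    (ρ * (B - t • A) * (B - t • A)).trace.re =
      (ρ * B * B).trace.re - t * (ρ * (A * B + B * A)).trace.re +
        t ^ 2 * (ρ * A * A).trace.re := by
  simp only [Matrix.mul_sub, Matrix.sub_mul, Matrix.mul_add, Matrix.mul_smul, Matrix.smul_mul,
    trace_sub, trace_add, trace_smul, Complex.sub_re, Complex.add_re, Complex.real_smul,
    Complex.re_ofReal_mul, Matrix.mul_assoc]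
  ring

omit [DecidableEq ι] in
theorem sq_norm_trace_commutator_le_anticomm_of_norm_form {ρ : Matrix ι ι ℂ} {K : ℝ}
    (hnorm : ∀ X Y : Matrix ι ι ℂ, X.IsHermitian → Y.IsHermitian →
      ‖(ρ * (X * Y - Y * X)).trace‖ ^ 2 ≤ K * ((ρ * X * X).trace.re * (ρ * Y * Y).trace.re))
    (hdef : ∀ X : Matrix ι ι ℂ, X.IsHermitian → (ρ * X * X).trace.re = 0 → X = 0)
    {A B : Matrix ι ι ℂ} (hA : A.IsHermitian) (hB : B.IsHermitian) :
    ‖(ρ * (A * B - B * A)).trace‖ ^ 2 ≤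
      K * ((ρ * A * A).trace.re * (ρ * B * B).trace.re -
        ((1 / 2) * (ρ * (A * B + B * A)).trace.re) ^ 2) := by
  by_cases hA0 : (ρ * A * A).trace.re = 0
  · obtain rfl := hdef A hA hA0
    simp
  set t := (1 / 2) * (ρ * (A * B + B * A)).trace.re / (ρ * A * A).trace.re
  have hcomm : A * (B - t • A) - (B - t • A) * A = A * B - B * A := by
    simp only [Matrix.mul_sub, Matrix.sub_mul, Matrix.mul_smul, Matrix.smul_mul]
    abel
  have h := hnorm A (B - t • A) hA (hB.sub (hA.smul (IsSelfAdjoint.all t)))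
  rw [hcomm, re_trace_mul_sub_smul_mul_sub_smul] at h
  convert h using 2
  simp only [t]
  field_simp
  ring

end

theorem gen_robertson_anticomm_general {n : ℕ} (ρ A B : Matrix (Fin n) (Fin n) ℂ)
    (hρ : ρ.PosDef)
    (hA : A.IsHermitian) (hB : B.IsHermitian)
    (lmin lmax : ℝ)
    (hmin : IsLeast (Set.range hρ.1.eigenvalues) lmin)
    (hmax : IsGreatest (Set.range hρ.1.eigenvalues) lmax) :
    ‖(ρ * (A * B - B * A)).trace‖ ^ 2 ≤
      (4 * (lmax - lmin) ^ 2 / (lmax + lmin) ^ 2) *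
        ((ρ * A * A).trace.re * (ρ * B * B).trace.re -
          ((1 / 2) * (ρ * (A * B + B * A)).trace.re) ^ 2) := by
  have hmin_pos : 0 < lmin := by
    obtain ⟨i, rfl⟩ := hmin.1
    exact hρ.eigenvalues_pos i
  exact sq_norm_trace_commutator_le_anticomm_of_norm_form
    (fun X Y hX hY => sq_norm_trace_commutator_le hρ.1 hmin_pos hmin hmax hX hY)
    (fun X hX => hρ.eq_zero_of_re_trace_mul_mul_self_eq_zero hX) hA hB

/-- Norm form of the generalized Robertson relation with the anticommutator
term. -/
theorem gen_robertson_anticomm {n : ℕ} (ρ A B : Matrix (Fin n) (Fin n) ℂ)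
    (hρ : ρ.PosDef) (hρtr : ρ.trace = 1)
    (hA : A.IsHermitian) (hB : B.IsHermitian)
    (lmin lmax : ℝ)
    (hmin : IsLeast (Set.range hρ.1.eigenvalues) lmin)
    (hmax : IsGreatest (Set.range hρ.1.eigenvalues) lmax)
    (hne : lmin < lmax) :
    ‖(ρ * (A * B - B * A)).trace‖ ^ 2 ≤
      (4 * (lmax - lmin) ^ 2 / (lmax + lmin) ^ 2) *
        ((ρ * A * A).trace.re * (ρ * B * B).trace.re -
          ((1 / 2) * (ρ * (A * B + B * A)).trace.re) ^ 2) :=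
  gen_robertson_anticomm_general ρ A B hρ hA hB lmin lmax hmin hmax
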